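/- For each k ≥ 1 and n ≥ 0, the map π ↦ (P̂(π), Q̂(π)) given by Fomin's growth rules on the square diagram is a bijection from the set of k-colored permutations of length n onto the set of pairs of k-ribbon Fibonacci path tableaux with entries 1, ..., n having the same k-ribbon Fibonacci shape. -/

import Mathlib

/-!
Fomin's local rules are invertible: on the configurations that occur in a growth diagram
(`IsLowerCorner`), the backward rule `invRule` recovers the bottom-left label and the content of a
square from its three other labels. Hence a growth diagram is determined by its right and top
edges, which gives injectivity, and running the backward rule from two saturated chains ending at
the same shape gives surjectivity. In both directions the local identity
`rank λ + rank ν = rank μ₁ + rank μ₂ + #X`, summed along a row or a column, shows that every row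
and every column holds exactly one `X`: this makes the edges of a diagram saturated chains, and the
marks of a backward diagram a colored permutation. Finally, a path tableau determines its chain,
because keeping only the entries `≤ i` recovers the tableau after `i` steps.
-/

namespace KRF

/-- A letter of the alphabet `{1_1, …, 1_k, 2}`:  `one j` stands for the letter `1_j`
(with `1 ≤ j ≤ k` for genuine letters), and `two` stands for the letter `2`. -/
inductive Letter (k : ℕ) : Type where
  | one : ℕ → Letter k
  | two : Letter k
deriving DecidableEq

/-- A word over the alphabet `{1_1, …, 1_k, 2}`, listed from the leftmost letter to the
rightmost letter. -/
abbrev Word (k : ℕ) := List (Letter k)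

/-- The contribution of a letter to the rank: each `1_j` counts `1` and each `2` counts `2`. -/
def Letter.rank {k : ℕ} : Letter k → ℕ
  | .one _ => 1
  | .two => 2

/-- The rank of a word: the sum of its letters. -/
def Word.rank {k : ℕ} (w : Word k) : ℕ := (w.map Letter.rank).sum

/-- The letter `1_j` is valid when `1 ≤ j ≤ k`. -/
def Letter.Valid (k : ℕ) : Letter k → Prop
  | .one j => 1 ≤ j ∧ j ≤ k
  | .two => True

/-- A genuine word of the Fibonacci poset `Z(k)`: all of its letters are valid. -/
def Word.Valid (k : ℕ) (w : Word k) : Prop := ∀ l ∈ w, l.Valid k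

/-- The cover relation of the Fibonacci poset `Z(k)`:  `z` is covered by `w` iff `z` is
obtained from `w` either by changing a `2` into some `1_j` when all letters to the left of
that `2` are `2`'s, or by deleting the leftmost letter of the form `1_j`. -/
def ZCovers (k : ℕ) (z w : Word k) : Prop :=
  (∃ (p s : Word k) (j : ℕ), (∀ l ∈ p, l = Letter.two) ∧ 1 ≤ j ∧ j ≤ k ∧
      w = p ++ Letter.two :: s ∧ z = p ++ Letter.one j :: s) ∨
  (∃ (p s : Word k) (j : ℕ), (∀ l ∈ p, l = Letter.two) ∧ 1 ≤ j ∧ j ≤ k ∧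
      w = p ++ Letter.one j :: s ∧ z = p ++ s)

/-- `c 0 ⋖ c 1 ⋖ ⋯ ⋖ c n` is a saturated chain in `Z(k)` starting at the empty word. -/
def IsZChain (k n : ℕ) (c : ℕ → Word k) : Prop :=
  c 0 = [] ∧ ∀ i, i < n → ZCovers k (c i) (c (i + 1))

end KRF
namespace KRF

/-- A column of a (tiled and filled) `k`-ribbon Fibonacci tableau.
`single h v` is a column of height 1 (shape letter `1_h`) tiled by one `k`-ribbon of
height `h` filled with the value `v`.
`double ht hb vt vb` is a column of height 2 (shape letter `2`) tiled by a `k`-ribbon of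
height `ht` filled with `vt` stacked on top of a `k`-ribbon of height `hb` (always
`hb = k + 1 - ht` for genuine tableaux) filled with `vb`. -/
inductive Col (k : ℕ) : Type where
  | single : ℕ → ℕ → Col k
  | double : ℕ → ℕ → ℕ → ℕ → Col k
deriving DecidableEq

/-- A (tiled, filled) `k`-ribbon Fibonacci tableau: its list of columns, from the leftmost
column to the rightmost one. -/
abbrev Tab (k : ℕ) := List (Col k)

/-- The shape letter of a column. -/
def Col.shape {k : ℕ} : Col k → Letter k
  | .single h _ => Letter.one h
  | .double _ _ _ _ => Letter.two

/-- The `k`-ribbon Fibonacci shape (a word) underlying a tableau. -/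
def Tab.shape {k : ℕ} (T : Tab k) : Word k := T.map Col.shape

/-- The value in the bottom `k`-ribbon of a column. -/
def Col.bottomVal {k : ℕ} : Col k → ℕ
  | .single _ v => v
  | .double _ _ _ vb => vb

/-- The heights occurring in a column are genuine ribbon heights: between `1` and `k`,
and in a column of height 2 the two heights sum to `k + 1`. -/
def Col.HeightsValid (k : ℕ) : Col k → Prop
  | .single h _ => 1 ≤ h ∧ h ≤ k
  | .double ht hb _ _ => 1 ≤ ht ∧ ht ≤ k ∧ hb = k + 1 - ht

/-- The list of all entries of a tableau (one for each `k`-ribbon). -/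
def Tab.entries {k : ℕ} (T : Tab k) : List ℕ :=
  (T.map fun c => match c with
    | Col.single _ v => [v]
    | Col.double _ _ vt vb => [vt, vb]).flatten

/-- The list of the bottom-ribbon values of the columns of a tableau. -/
def Tab.bottoms {k : ℕ} (T : Tab k) : List ℕ := T.map Col.bottomVal

/-- `T` is a standard `k`-ribbon Fibonacci tableau with entries `1, …, n`:
heights are valid, the entries are exactly `1, …, n`,  and the tableau can be built by
placing `n, n-1, …, 1` in order, each new `k`-ribbon being either appended (as a new
rightmost height-1 column) to the shape formed by the `k`-ribbons containing larger
entries, or stacked on top of a single such `k`-ribbon.  Equivalently (and this is how we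
formalize it): the bottom entries strictly decrease from left to right (in particular the
`k`-ribbon containing the leftmost square of the bottom row contains `n`), and in each
column of height 2 the top entry is smaller than the bottom entry. -/
def IsStandardTab (k n : ℕ) (T : Tab k) : Prop :=
  (∀ c ∈ T, Col.HeightsValid k c) ∧
  (Tab.entries T).Perm (List.range' 1 n) ∧
  List.Chain' (fun a b => b < a) (Tab.bottoms T) ∧
  (∀ c ∈ T, ∀ ht hb vt vb, c = Col.double ht hb vt vb → vt < vb)

/-- Updating a (partial) path tableau along one cover step `z ⋖ w` of `Z(k)`, placing the
value `i` in the `k` new squares of `w` relative to `z`:  if `w` is obtained from `z` by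
inserting a letter `1_j` after the prefix of `2`'s, a new height-1 column with a single
ribbon of height `j` filled with `i` is created there; if `w` is obtained from `z` by
changing the letter `1_h` just after the prefix of `2`'s into a `2`, the `k` new squares
of that column form a `k`-ribbon of height `k + 1 - h` filled with `i`, stacked on top of
the already present `k`-ribbon of height `h`. -/
def updateTab (k : ℕ) (i : ℕ) : Word k → Word k → Tab k → Tab k
  | Letter.two :: z', Letter.two :: w', c :: T => c :: updateTab k i z' w' T
  | Letter.one h :: _, Letter.two :: _, Col.single _ v :: T =>
      Col.double (k + 1 - h) h i v :: T
  | z, Letter.one j :: w', T => if z = w' then Col.single j i :: T else T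
  | _, _, T => T

/-- The `k`-ribbon Fibonacci path tableau determined by a saturated chain in `Z(k)`:
for each `i = 1, …, n` the value `i` is placed in the `k` new squares of `c i` relative
to `c (i-1)`. -/
def chainTab (k : ℕ) (c : ℕ → Word k) : ℕ → Tab k
  | 0 => []
  | m + 1 => updateTab k (m + 1) (c m) (c (m + 1)) (chainTab k c m)

/-- `T` is a `k`-ribbon Fibonacci path tableau with entries `1, …, n`: it is obtained
from some saturated chain `∅ = c 0 ⋖ c 1 ⋖ ⋯ ⋖ c n` in `Z(k)` by placing `i`'s in the
`k` new squares created at the `i`-th step. -/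
def IsPathTab (k n : ℕ) (T : Tab k) : Prop :=
  ∃ c : ℕ → Word k, IsZChain k n c ∧ T = chainTab k c n

end KRF
namespace KRF

/-- A `k`-colored permutation of length `n`: a permutation `x_1 x_2 ⋯ x_n` of `{1, …, n}`
(here `x_i = perm i + 1`, using `Fin n` positions and values) together with a color
`color i ∈ {1, …, k}` attached to each entry. -/
structure ColoredPerm (n k : ℕ) : Type where
  perm : Equiv.Perm (Fin n)
  color : Fin n → ℕ
  color_pos : ∀ i, 1 ≤ color i
  color_le : ∀ i, color i ≤ k

/-- Insertion of a value `x` of color `j` into a `k`-ribbon Fibonacci tableau: compare `x`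
with the value `t` in the `k`-ribbon containing the leftmost square of the bottom row.
If the tableau is empty or `x > t`, a new leftmost height-1 column consisting of a single
`k`-ribbon of height `j` filled with `x` is created.  If `x < t`, a `k`-ribbon of height
`j` filled with `x` is placed on top of the `k`-ribbon containing `t` (which is forced to
become a `k`-ribbon of height `k + 1 - j`); if a `k`-ribbon of height `l` filled with `b`
was already on top of the ribbon containing `t`, it is bumped out and the value `b` with
color `l` is inserted recursively into the tableau formed by the columns to the right. -/
def insertVal (k : ℕ) (x j : ℕ) : Tab k → Tab k
  | [] => [Col.single j x]
  | c :: rest =>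
    if Col.bottomVal c < x then Col.single j x :: c :: rest
    else
      match c with
      | Col.single _ v => Col.double j (k + 1 - j) x v :: rest
      | Col.double ht _ vt vb => Col.double j (k + 1 - j) x vb :: insertVal k vt ht rest

/-- The insertion tableau obtained after inserting the first `i` colored entries
`x_1^{j_1}, …, x_i^{j_i}` of the `k`-colored permutation `π` into the empty tableau. -/
def PPartial (k n : ℕ) (π : ColoredPerm n k) (i : ℕ) : Tab k :=
  ((List.finRange n).take i).foldl
    (fun T m => insertVal k ((π.perm m : ℕ) + 1) (π.color m) T) []

/-- The insertion tableau `P(π)` of a `k`-colored permutation. -/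
def PTab (k n : ℕ) (π : ColoredPerm n k) : Tab k := PPartial k n π n

/-- The chain of shapes of the partial insertion tableaux of `π`. -/
def QChain (k n : ℕ) (π : ColoredPerm n k) (i : ℕ) : Word k :=
  Tab.shape (PPartial k n π i)

/-- The recording tableau `Q(π)`: it has the same shape as `P(π)`, and after the `i`-th
insertion the value `i` is placed in the `k` squares by which the shape grew at step `i`. -/
def QTab (k n : ℕ) (π : ColoredPerm n k) : Tab k := chainTab k (QChain k n π) n

end KRF
namespace KRF

/-- Fomin's local growth rule: given the labels `ν` (bottom-left), `μ₁` (top-left),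
`μ₂` (bottom-right) of a unit square and the `X` of the square (`some j` if the square
contains an `X^j`, `none` otherwise), it computes the top-right label `λ`:
(1) if exactly one of `μ₁, μ₂` covers `ν` and the other equals `ν`, then `λ` is the
covering one; (2) if both cover `ν` then `λ = 2ν`; (3) if `μ₁ = ν = μ₂` and the square
contains an `X^j` then `λ = 1_j ν`; (4) if `μ₁ = ν = μ₂` and there is no `X`, `λ = ν`. -/
def growthRule (k : ℕ) (ν μ₁ μ₂ : Word k) (x : Option ℕ) : Word k :=
  if μ₁ = ν ∧ μ₂ = ν then
    match x with
    | some j => Letter.one j :: ν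
    | none => ν
  else if μ₁ = ν then μ₂
  else if μ₂ = ν then μ₁
  else Letter.two :: ν

/-- The content of the unit square in column `c+1` and row `r+1` (1-indexed) of the square
diagram of `π`: `some j` if it contains an `X^j` (i.e. `π` sends position `c+1` to value
`r+1`, colored `j`), and `none` otherwise. -/
def squareX (k n : ℕ) (π : ColoredPerm n k) (c r : ℕ) : Option ℕ :=
  if h : c < n ∧ r < n then
    if (π.perm ⟨c, h.1⟩ : ℕ) = r then some (π.color ⟨c, h.1⟩) else none
  else none

/-- The labels of the corners of the square diagram of `π` produced by Fomin's growth
rules: every corner on the left and bottom edges is labeled by the empty word, and the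
top-right corner of each unit square is computed by the local growth rule. -/
def growth (k n : ℕ) (π : ColoredPerm n k) : ℕ → ℕ → Word k
  | 0, _ => []
  | _ + 1, 0 => []
  | c + 1, r + 1 =>
      growthRule k (growth k n π c r) (growth k n π c (r + 1)) (growth k n π (c + 1) r)
        (squareX k n π c r)
termination_by c r => (c, r)

/-- The saturated chain read bottom-to-top up the right edge of the growth diagram. -/
def PhatChain (k n : ℕ) (π : ColoredPerm n k) (r : ℕ) : Word k := growth k n π n r

/-- The saturated chain read left-to-right along the top edge of the growth diagram. -/
def QhatChain (k n : ℕ) (π : ColoredPerm n k) (c : ℕ) : Word k := growth k n π c n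

/-- The `k`-ribbon Fibonacci path tableau `P̂(π)` obtained from the right edge of the
growth diagram of `π`. -/
def PhatTab (k n : ℕ) (π : ColoredPerm n k) : Tab k := chainTab k (PhatChain k n π) n

/-- The `k`-ribbon Fibonacci path tableau `Q̂(π)` obtained from the top edge of the
growth diagram of `π`. -/
def QhatTab (k n : ℕ) (π : ColoredPerm n k) : Tab k := chainTab k (QhatChain k n π) n

end KRF

namespace KRF

open Relation Finset

theorem _root_.Relation.ReflGen.rel_of_ne {α : Type*} {r : α → α → Prop} {a b : α}
    (h : ReflGen r a b) (hne : a ≠ b) : r a b := by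
  cases h with
  | refl => exact absurd rfl hne
  | single h => exact h

variable {k : ℕ}

@[simp]
theorem Word.rank_nil : Word.rank ([] : Word k) = 0 := rfl

theorem Word.rank_cons (l : Letter k) (w : Word k) : Word.rank (l :: w) = l.rank + w.rank := by
  simp [Word.rank]

theorem Word.rank_append (u w : Word k) : Word.rank (u ++ w) = u.rank + w.rank := by
  simp [Word.rank]

theorem Word.eq_nil_of_rank_eq_zero {w : Word k} (h : w.rank = 0) : w = [] := by
  cases w with
  | nil => rfl
  | cons l w => cases l <;> simp [Word.rank_cons, Letter.rank] at h

theorem ZCovers.rank_add_one {z w : Word k} (h : ZCovers k z w) : z.rank + 1 = w.rank := by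
  rcases h with ⟨p, s, j, -, -, -, rfl, rfl⟩ | ⟨p, s, j, -, -, -, rfl, rfl⟩ <;>
    simp only [Word.rank_append, Word.rank_cons, Letter.rank] <;> omega

theorem ZCovers.ne {z w : Word k} (h : ZCovers k z w) : z ≠ w := by
  rintro rfl
  have := h.rank_add_one
  omega

theorem rank_le_of_reflGen {z w : Word k} (h : ReflGen (ZCovers k) z w) : z.rank ≤ w.rank := by
  cases h with
  | refl => rfl
  | single h => exact h.rank_add_one ▸ Nat.le_succ _

theorem rank_le_of_reflGen_succ {w : ℕ → Word k} {m : ℕ}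
    (h : ∀ i < m, ReflGen (ZCovers k) (w i) (w (i + 1))) {i : ℕ} (hi : i ≤ m) :
    (w i).rank ≤ (w m).rank := by
  induction m with
  | zero => rw [Nat.le_zero.1 hi]
  | succ m ih =>
    rcases Nat.of_le_succ hi with hi | rfl
    · exact (ih (fun i hi => h i (by omega)) hi).trans (rank_le_of_reflGen (h m (by omega)))
    · rfl

theorem IsZChain.rank {n : ℕ} {c : ℕ → Word k} (hc : IsZChain k n c) {i : ℕ} (hi : i ≤ n) :
    (c i).rank = i := by
  induction i with
  | zero => simp [hc.1, Word.rank]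
  | succ i ih => rw [← (hc.2 i hi).rank_add_one, ih (by omega)]

theorem eq_nil_or_eq_two_cons {p : Word k} (hp : ∀ l ∈ p, l = .two) :
    p = [] ∨ ∃ p', p = .two :: p' ∧ ∀ l ∈ p', l = .two := by
  cases p with
  | nil => exact .inl rfl
  | cons l p => exact .inr ⟨p, by rw [hp l (by simp)], fun l hl => hp l (by simp [hl])⟩

theorem append_two_cons {p : Word k} (hp : ∀ l ∈ p, l = .two) (s : Word k) :
    p ++ .two :: s = .two :: (p ++ s) := by
  rw [List.eq_replicate_iff.2 ⟨rfl, hp⟩, ← List.singleton_append, ← List.append_assoc,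
    ← List.replicate_succ', List.replicate_succ, List.cons_append]

theorem zCovers_one_cons {j : ℕ} (hj : 1 ≤ j ∧ j ≤ k) (w : Word k) : ZCovers k w (.one j :: w) :=
  .inr ⟨[], w, j, by simp, hj.1, hj.2, rfl, rfl⟩

theorem ZCovers.two_cons {ν μ : Word k} (h : ZCovers k ν μ) : ZCovers k μ (.two :: ν) := by
  rcases h with ⟨p, s, j, hp, hj1, hj2, rfl, rfl⟩ | ⟨p, s, j, hp, hj1, hj2, rfl, rfl⟩
  · refine .inr ⟨.two :: p, s, j, ?_, hj1, hj2, rfl, append_two_cons hp s⟩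
    simpa using hp
  · exact .inl ⟨p, s, j, hp, hj1, hj2, (append_two_cons hp s).symm, rfl⟩

theorem ZCovers.of_one_cons {z w : Word k} {j : ℕ} (h : ZCovers k z (.one j :: w)) :
    z = w ∧ 1 ≤ j ∧ j ≤ k := by
  rcases h with ⟨p, s, i, hp, -, -, hw, -⟩ | ⟨p, s, i, hp, hi1, hi2, hw, rfl⟩ <;>
    rcases eq_nil_or_eq_two_cons hp with rfl | ⟨p, rfl, -⟩ <;>
    simp only [List.nil_append, List.cons_append, List.cons.injEq, Letter.one.injEq, reduceCtorEq,
      false_and] at hw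
  obtain ⟨rfl, rfl⟩ := hw
  exact ⟨rfl, hi1, hi2⟩

theorem ZCovers.of_two_cons {z w : Word k} (h : ZCovers k z (.two :: w)) : ZCovers k w z := by
  rcases h with ⟨p, s, j, hp, hj1, hj2, hw, rfl⟩ | ⟨p, s, j, hp, hj1, hj2, hw, rfl⟩ <;>
    rcases eq_nil_or_eq_two_cons hp with rfl | ⟨p, rfl, hp'⟩ <;>
    simp only [List.nil_append, List.cons_append, List.cons.injEq, reduceCtorEq, false_and,
      true_and] at hw <;> subst hw
  · exact zCovers_one_cons ⟨hj1, hj2⟩ w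
  · exact ZCovers.two_cons (.inl ⟨p, s, j, hp', hj1, hj2, rfl, rfl⟩)
  · exact ZCovers.two_cons (.inr ⟨p, s, j, hp', hj1, hj2, rfl, rfl⟩)

/-- Fomin's backward local rule: from the labels `μ₁` (top-left), `μ₂` (bottom-right) and `lam`
(top-right) of a unit square it computes its bottom-left label and its content. -/
def invRule (k : ℕ) (μ₁ μ₂ lam : Word k) : Word k × Option ℕ :=
  if μ₁ = lam then (μ₂, none)
  else if μ₂ = lam then (μ₁, none)
  else match lam with
    | .one j :: ν => (ν, some j)
    | _ :: ν => (ν, none)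
    | [] => ([], none)

/-- The configurations of the bottom-left label `ν`, top-left label `μ₁`, bottom-right label `μ₂`
and content `x` of a unit square that occur in growth diagrams; on them `growthRule` and `invRule`
are mutually inverse. -/
structure IsLowerCorner (ν μ₁ μ₂ : Word k) (x : Option ℕ) : Prop where
  left : ReflGen (ZCovers k) ν μ₁
  bottom : ReflGen (ZCovers k) ν μ₂
  mark : x = none ∨ μ₁ = ν ∧ μ₂ = ν
  color : ∀ j ∈ x, 1 ≤ j ∧ j ≤ k

theorem growthRule_comm (ν μ₁ μ₂ : Word k) (x : Option ℕ) :
    growthRule k ν μ₂ μ₁ x = growthRule k ν μ₁ μ₂ x := by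
  unfold growthRule
  by_cases h₁ : μ₁ = ν <;> by_cases h₂ : μ₂ = ν <;> simp [h₁, h₂]

theorem growthRule_none_left_eq (ν μ₂ : Word k) : growthRule k ν ν μ₂ none = μ₂ := by
  by_cases h : μ₂ = ν <;> simp [growthRule, h]

theorem growthRule_none_bottom_eq (ν μ₁ : Word k) : growthRule k ν μ₁ ν none = μ₁ := by
  rw [growthRule_comm, growthRule_none_left_eq]

namespace IsLowerCorner

variable {ν μ₁ μ₂ : Word k} {x : Option ℕ}

theorem symm (h : IsLowerCorner ν μ₁ μ₂ x) : IsLowerCorner ν μ₂ μ₁ x :=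
  ⟨h.bottom, h.left, h.mark.imp_right And.symm, h.color⟩

theorem eq_none_of_zCovers (h : IsLowerCorner ν μ₁ μ₂ x) (h₁ : ZCovers k ν μ₁) : x = none :=
  h.mark.resolve_right fun h' => h₁.ne h'.1.symm

theorem reflGen_growthRule_left (h : IsLowerCorner ν μ₁ μ₂ x) :
    ReflGen (ZCovers k) μ₁ (growthRule k ν μ₁ μ₂ x) := by
  rcases h.left with _ | h₁
  · rcases h.bottom with _ | h₂
    · cases x with
      | none => rw [growthRule_none_left_eq]
      | some j => simpa [growthRule] using .single (zCovers_one_cons (h.color j rfl) ν)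
    · rw [h.symm.eq_none_of_zCovers h₂, growthRule_none_left_eq]
      exact .single h₂
  · rw [h.eq_none_of_zCovers h₁]
    rcases h.bottom with _ | h₂
    · rw [growthRule_none_bottom_eq]
    · simpa [growthRule, h₁.ne.symm, h₂.ne.symm] using .single h₁.two_cons

theorem reflGen_growthRule_bottom (h : IsLowerCorner ν μ₁ μ₂ x) :
    ReflGen (ZCovers k) μ₂ (growthRule k ν μ₁ μ₂ x) :=
  growthRule_comm ν μ₁ μ₂ x ▸ h.symm.reflGen_growthRule_left

theorem invRule_growthRule (h : IsLowerCorner ν μ₁ μ₂ x) :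
    invRule k μ₁ μ₂ (growthRule k ν μ₁ μ₂ x) = (ν, x) := by
  rcases h.left with _ | h₁
  · rcases h.bottom with _ | h₂
    · cases x <;> simp [growthRule, invRule]
    · rw [h.symm.eq_none_of_zCovers h₂, growthRule_none_left_eq]
      simp [invRule, h₂.ne]
  · rw [h.eq_none_of_zCovers h₁]
    rcases h.bottom with _ | h₂
    · simp [growthRule_none_bottom_eq, invRule]
    · have hr₁ := h₁.rank_add_one
      have hr₂ := h₂.rank_add_one
      have hne (μ : Word k) (hr : ν.rank + 1 = μ.rank) : μ ≠ .two :: ν := by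
        rintro rfl
        rw [Word.rank_cons, Letter.rank] at hr
        omega
      simp [growthRule, invRule, h₁.ne.symm, h₂.ne.symm, hne μ₁ hr₁, hne μ₂ hr₂]

theorem rank_growthRule (h : IsLowerCorner ν μ₁ μ₂ x) :
    (growthRule k ν μ₁ μ₂ x).rank + ν.rank = μ₁.rank + μ₂.rank + if x.isSome then 1 else 0 := by
  rcases h.left with _ | h₁
  · rcases h.bottom with _ | h₂
    · cases x with
      | none => simp [growthRule]
      | some j =>
        simp only [growthRule, and_self, ite_true, Word.rank_cons, Letter.rank, Option.isSome_some]
        omega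
    · simp [h.symm.eq_none_of_zCovers h₂, growthRule_none_left_eq, add_comm]
  · rw [h.eq_none_of_zCovers h₁]
    rcases h.bottom with _ | h₂
    · simp [growthRule_none_bottom_eq]
    · have := h₁.rank_add_one
      have := h₂.rank_add_one
      simp only [growthRule, h₁.ne.symm, h₂.ne.symm, and_self, ite_false, Word.rank_cons,
        Letter.rank, Option.isSome_none, Bool.false_eq_true]
      omega

end IsLowerCorner

section InvRule

variable {μ₁ μ₂ lam : Word k}

theorem isLowerCorner_invRule (h₁ : ReflGen (ZCovers k) μ₁ lam) (h₂ : ReflGen (ZCovers k) μ₂ lam) :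
    IsLowerCorner (invRule k μ₁ μ₂ lam).1 μ₁ μ₂ (invRule k μ₁ μ₂ lam).2 := by
  rcases h₁ with _ | h₁
  · simpa [invRule] using ⟨h₂, .refl, .inl rfl, by simp⟩
  rcases h₂ with _ | h₂
  · simpa [invRule, h₁.ne] using ⟨.refl, .single h₁, .inl rfl, by simp⟩
  match lam, h₁, h₂ with
  | [], h₁, _ => simpa using h₁.rank_add_one
  | .one j :: ν, h₁, h₂ =>
    obtain ⟨rfl, hj⟩ := h₁.of_one_cons
    obtain ⟨rfl, -⟩ := h₂.of_one_cons
    simpa [invRule] using ⟨.refl, .refl, .inr ⟨rfl, rfl⟩, by simpa using hj⟩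
  | .two :: ν, h₁, h₂ =>
    simpa [invRule, h₁.ne, h₂.ne] using
      ⟨.single h₁.of_two_cons, .single h₂.of_two_cons, .inl rfl, by simp⟩

theorem growthRule_invRule (h₁ : ReflGen (ZCovers k) μ₁ lam) (h₂ : ReflGen (ZCovers k) μ₂ lam) :
    growthRule k (invRule k μ₁ μ₂ lam).1 μ₁ μ₂ (invRule k μ₁ μ₂ lam).2 = lam := by
  rcases h₁ with _ | h₁
  · simp [invRule, growthRule_none_bottom_eq]
  rcases h₂ with _ | h₂
  · simp [invRule, h₁.ne, growthRule_none_left_eq]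
  match lam, h₁, h₂ with
  | [], h₁, _ => simpa using h₁.rank_add_one
  | .one j :: ν, h₁, h₂ =>
    obtain ⟨rfl, -⟩ := h₁.of_one_cons
    obtain ⟨rfl, -⟩ := h₂.of_one_cons
    simp [invRule, growthRule]
  | .two :: ν, h₁, h₂ =>
    simp [invRule, growthRule, h₁.ne, h₂.ne, h₁.of_two_cons.ne.symm, h₂.of_two_cons.ne.symm]

end InvRule

theorem add_card_filter_eq_of_square {f : ℕ → ℕ → ℕ} {mark : ℕ → ℕ → Bool} {m r : ℕ}
    (h : ∀ c < m,
      f (c + 1) (r + 1) + f c r = f c (r + 1) + f (c + 1) r + if mark c r then 1 else 0) :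
    f m (r + 1) + f 0 r = f 0 (r + 1) + f m r + ((range m).filter (mark · r)).card := by
  induction m with
  | zero => simp
  | succ m ih =>
    have hm := h m (by omega)
    have ih := ih fun c hc => h c (by omega)
    rw [card_filter] at ih ⊢
    rw [sum_range_succ]
    omega

section Growth

variable {n : ℕ} (π : ColoredPerm n k)

theorem growth_zero_left (r : ℕ) : growth k n π 0 r = [] := by
  rw [growth]

theorem growth_zero_bottom (c : ℕ) : growth k n π c 0 = [] := by
  cases c <;> rw [growth]

theorem growth_succ_succ (c r : ℕ) :
    growth k n π (c + 1) (r + 1) = growthRule k (growth k n π c r) (growth k n π c (r + 1))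
      (growth k n π (c + 1) r) (squareX k n π c r) := by
  rw [growth]

theorem squareX_eq_some_iff {c r j : ℕ} :
    squareX k n π c r = some j ↔ ∃ h : c < n, (π.perm ⟨c, h⟩ : ℕ) = r ∧ π.color ⟨c, h⟩ = j := by
  unfold squareX
  split_ifs with h₁ h₂
  · simp [h₁.1, h₂]
  · simp [h₁.1, h₂]
  · simp only [false_iff, not_exists, not_and]
    intro hc hr
    exact absurd ⟨hc, hr ▸ (π.perm _).isLt⟩ h₁

theorem isSome_squareX_iff {c r : ℕ} :
    (squareX k n π c r).isSome ↔ ∃ h : c < n, (π.perm ⟨c, h⟩ : ℕ) = r := by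
  simp [Option.isSome_iff_exists, squareX_eq_some_iff]

theorem card_filter_isSome_squareX_row {r : ℕ} (hr : r < n) :
    ((range n).filter fun c => (squareX k n π c r).isSome).card = 1 := by
  refine card_eq_one.2 ⟨π.perm.symm ⟨r, hr⟩, ?_⟩
  ext c
  simp only [mem_filter, mem_range, mem_singleton, isSome_squareX_iff]
  constructor
  · rintro ⟨-, hc, hcr⟩
    rw [← show π.perm ⟨c, hc⟩ = ⟨r, hr⟩ from Fin.ext hcr, Equiv.symm_apply_apply]
  · rintro rfl
    exact ⟨Fin.isLt _, Fin.isLt _, by simp⟩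

theorem card_filter_isSome_squareX_col {c : ℕ} (hc : c < n) :
    ((range n).filter fun r => (squareX k n π c r).isSome).card = 1 := by
  refine card_eq_one.2 ⟨π.perm ⟨c, hc⟩, ?_⟩
  ext r
  simp only [mem_filter, mem_range, mem_singleton, isSome_squareX_iff]
  constructor
  · rintro ⟨-, -, rfl⟩
    rfl
  · rintro rfl
    exact ⟨Fin.isLt _, hc, rfl⟩

theorem squareX_eq_none_of_ne_col {c r t : ℕ} (h : (squareX k n π c r).isSome) (ht : t ≠ c) :
    squareX k n π t r = none := by
  rw [← Option.not_isSome_iff_eq_none, isSome_squareX_iff]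
  rintro ⟨htn, hr⟩
  obtain ⟨hcn, hc⟩ := (isSome_squareX_iff π).1 h
  exact ht (Fin.ext_iff.1 (π.perm.injective (Fin.ext (hr.trans hc.symm))))

theorem squareX_eq_none_of_ne_row {c r s : ℕ} (h : (squareX k n π c r).isSome) (hs : s ≠ r) :
    squareX k n π c s = none := by
  rw [← Option.not_isSome_iff_eq_none, isSome_squareX_iff]
  rintro ⟨hcn, rfl⟩
  obtain ⟨_, hr⟩ := (isSome_squareX_iff π).1 h
  exact hs hr

theorem growth_succ_row_eq {c r : ℕ} (h : ∀ t < c, squareX k n π t r = none) :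
    growth k n π c (r + 1) = growth k n π c r := by
  induction c with
  | zero => simp [growth_zero_left]
  | succ c ih =>
    rw [growth_succ_succ, ih fun t ht => h t (by omega), h c (by omega), growthRule_none_left_eq]

theorem growth_succ_col_eq {c r : ℕ} (h : ∀ s < r, squareX k n π c s = none) :
    growth k n π (c + 1) r = growth k n π c r := by
  induction r with
  | zero => simp [growth_zero_bottom]
  | succ r ih =>
    rw [growth_succ_succ, ih fun s hs => h s (by omega), h r (by omega), growthRule_none_bottom_eq]

theorem growth_isLowerCorner (c r : ℕ) :
    IsLowerCorner (growth k n π c r) (growth k n π c (r + 1)) (growth k n π (c + 1) r)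
      (squareX k n π c r) := by
  refine ⟨?left, ?bottom, ?mark, ?color⟩
  case left =>
    cases c with
    | zero => rw [growth_zero_left, growth_zero_left]
    | succ c => rw [growth_succ_succ]; exact (growth_isLowerCorner c r).reflGen_growthRule_bottom
  case bottom =>
    cases r with
    | zero => rw [growth_zero_bottom, growth_zero_bottom]
    | succ r => rw [growth_succ_succ]; exact (growth_isLowerCorner c r).reflGen_growthRule_left
  case mark =>
    cases hx : squareX k n π c r with
    | none => exact .inl rfl
    | some j =>
      have h : (squareX k n π c r).isSome := by simp [hx]
      exact .inr ⟨growth_succ_row_eq π fun t ht => squareX_eq_none_of_ne_col π h ht.ne,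
        growth_succ_col_eq π fun s hs => squareX_eq_none_of_ne_row π h hs.ne⟩
  case color =>
    intro j hj
    obtain ⟨hc, -, rfl⟩ := (squareX_eq_some_iff π).1 hj
    exact ⟨π.color_pos _, π.color_le _⟩
termination_by c + r

theorem rank_growth_succ_succ (c r : ℕ) :
    (growth k n π (c + 1) (r + 1)).rank + (growth k n π c r).rank =
      (growth k n π c (r + 1)).rank + (growth k n π (c + 1) r).rank +
        if (squareX k n π c r).isSome then 1 else 0 :=
  growth_succ_succ π c r ▸ (growth_isLowerCorner π c r).rank_growthRule

theorem isZChain_phatChain : IsZChain k n (PhatChain k n π) := by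
  refine ⟨growth_zero_bottom π n, fun r hr => ?_⟩
  have hcount := add_card_filter_eq_of_square (f := fun c r => (growth k n π c r).rank)
    (mark := fun c r => (squareX k n π c r).isSome) (m := n) fun c _ => rank_growth_succ_succ π c r
  simp only [card_filter_isSome_squareX_row π hr, growth_zero_left, Word.rank_nil] at hcount
  exact (growth_isLowerCorner π n r).left.rel_of_ne fun h => by rw [h] at hcount; omega

theorem isZChain_qhatChain : IsZChain k n (QhatChain k n π) := by
  refine ⟨growth_zero_left π n, fun c hc => ?_⟩
  have hcount := add_card_filter_eq_of_square (f := fun r c => (growth k n π c r).rank)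
    (mark := fun r c => (squareX k n π c r).isSome) (m := n) (r := c) fun r _ => by
      have := rank_growth_succ_succ π c r
      omega
  simp only [card_filter_isSome_squareX_col π hc, growth_zero_bottom, Word.rank_nil] at hcount
  exact (growth_isLowerCorner π c n).bottom.rel_of_ne fun h => by rw [h] at hcount; omega

end Growth

section Restrict

def Col.restrict (i : ℕ) : Col k → Option (Col k)
  | .single h v => if v ≤ i then some (.single h v) else none
  | .double ht hb vt vb =>
      if vt ≤ i then some (.double ht hb vt vb)
      else if vb ≤ i then some (.single hb vb) else none

def Tab.restrict (i : ℕ) (T : Tab k) : Tab k := T.filterMap (Col.restrict i)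

@[simp]
theorem Tab.shape_cons (c : Col k) (T : Tab k) : Tab.shape (c :: T) = c.shape :: T.shape := rfl

@[simp]
theorem Tab.shape_append (P S : Tab k) : Tab.shape (P ++ S) = P.shape ++ S.shape :=
  List.map_append ..

theorem updateTab_raise (i h : ℕ) {p : Word k} (hp : ∀ l ∈ p, l = .two) (s : Word k) {T : Tab k}
    (hT : T.shape = p ++ .one h :: s) :
    ∃ (P S : Tab k) (v : ℕ), T = P ++ .single h v :: S ∧ P.shape = p ∧ S.shape = s ∧
      updateTab k i (p ++ .one h :: s) (p ++ .two :: s) T =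
        P ++ .double (k + 1 - h) h i v :: S := by
  induction p generalizing T with
  | nil =>
    cases T with
    | nil => simp [Tab.shape] at hT
    | cons c T =>
      rw [Tab.shape_cons, List.nil_append, List.cons.injEq] at hT
      obtain ⟨hc, rfl⟩ := hT
      cases c with
      | single h' v =>
        cases hc
        exact ⟨[], T, v, rfl, rfl, rfl, by simp [updateTab]⟩
      | double => simp [Col.shape] at hc
  | cons l p ih =>
    obtain rfl := hp l (by simp)
    cases T with
    | nil => simp [Tab.shape] at hT
    | cons c T =>
      rw [Tab.shape_cons, List.cons_append, List.cons.injEq] at hT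
      obtain ⟨hc, hT⟩ := hT
      obtain ⟨P, S, v, rfl, hP, hS, hup⟩ := ih (fun l hl => hp l (by simp [hl])) hT
      cases c with
      | single => simp [Col.shape] at hc
      | double a b vt vb =>
        refine ⟨.double a b vt vb :: P, S, v, rfl, ?_, hS, ?_⟩
        · simp [Col.shape, ← hP]
        · simp [updateTab, hup]

theorem updateTab_insert (i j : ℕ) {p : Word k} (hp : ∀ l ∈ p, l = .two) (s : Word k) {T : Tab k}
    (hT : T.shape = p ++ s) :
    ∃ P S : Tab k, T = P ++ S ∧ P.shape = p ∧ S.shape = s ∧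
      updateTab k i (p ++ s) (p ++ .one j :: s) T = P ++ .single j i :: S := by
  induction p generalizing T with
  | nil => exact ⟨[], T, rfl, rfl, hT, by simp [updateTab]⟩
  | cons l p ih =>
    obtain rfl := hp l (by simp)
    cases T with
    | nil => simp [Tab.shape] at hT
    | cons c T =>
      rw [Tab.shape_cons, List.cons_append, List.cons.injEq] at hT
      obtain ⟨hc, hT⟩ := hT
      obtain ⟨P, S, rfl, hP, hS, hup⟩ := ih (fun l hl => hp l (by simp [hl])) hT
      refine ⟨c :: P, S, rfl, by simp [hc, ← hP], hS, ?_⟩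
      cases c <;> simp [updateTab, hup]

section Update

variable {i : ℕ} {z w : Word k} {T : Tab k}

theorem shape_updateTab (hc : ZCovers k z w) (hT : T.shape = z) :
    (updateTab k i z w T).shape = w := by
  rcases hc with ⟨p, s, j, hp, -, -, rfl, rfl⟩ | ⟨p, s, j, hp, -, -, rfl, rfl⟩
  · obtain ⟨P, S, v, -, hP, hS, hup⟩ := updateTab_raise i j hp s hT
    simp [hup, hP, hS, Col.shape]
  · obtain ⟨P, S, -, hP, hS, hup⟩ := updateTab_insert i j hp s hT
    simp [hup, hP, hS, Col.shape]

theorem mem_entries_updateTab (hc : ZCovers k z w) (hT : T.shape = z) {v : ℕ}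
    (hv : v ∈ (updateTab k i z w T).entries) : v = i ∨ v ∈ T.entries := by
  rcases hc with ⟨p, s, j, hp, -, -, rfl, rfl⟩ | ⟨p, s, j, hp, -, -, rfl, rfl⟩
  · obtain ⟨P, S, u, rfl, -, -, hup⟩ := updateTab_raise i j hp s hT
    rw [hup] at hv
    grind [Tab.entries]
  · obtain ⟨P, S, rfl, -, -, hup⟩ := updateTab_insert i j hp s hT
    rw [hup] at hv
    grind [Tab.entries]

theorem restrict_updateTab {m : ℕ} (hc : ZCovers k z w) (hT : T.shape = z) (him : i < m) :
    (updateTab k m z w T).restrict i = T.restrict i := by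
  rcases hc with ⟨p, s, j, hp, -, -, rfl, rfl⟩ | ⟨p, s, j, hp, -, -, rfl, rfl⟩
  · obtain ⟨P, S, v, rfl, -, -, hup⟩ := updateTab_raise m j hp s hT
    simp [hup, Tab.restrict, List.filterMap_cons, Col.restrict, Nat.not_le.2 him]
  · obtain ⟨P, S, rfl, -, -, hup⟩ := updateTab_insert m j hp s hT
    simp [hup, Tab.restrict, Col.restrict, Nat.not_le.2 him]

end Update

theorem Tab.restrict_eq_self {i : ℕ} {T : Tab k} (h : ∀ v ∈ T.entries, v ≤ i) :
    T.restrict i = T := by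
  induction T with
  | nil => rfl
  | cons c T ih =>
    simp only [Tab.entries, List.map_cons, List.flatten_cons, List.mem_append] at h
    have hc : Col.restrict i c = some c := by
      cases c <;> simp_all [Col.restrict]
    rw [Tab.restrict, List.filterMap_cons, hc, ← Tab.restrict, ih fun v hv => h v (.inr hv)]

namespace IsZChain

variable {n : ℕ} {c : ℕ → Word k}

theorem shape_chainTab (hc : IsZChain k n c) {m : ℕ} (hm : m ≤ n) :
    (chainTab k c m).shape = c m := by
  induction m with
  | zero => simp [chainTab, Tab.shape, hc.1]
  | succ m ih => exact shape_updateTab (hc.2 m hm) (ih (by omega))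

theorem le_of_mem_entries_chainTab (hc : IsZChain k n c) {m : ℕ} (hm : m ≤ n) {v : ℕ}
    (hv : v ∈ (chainTab k c m).entries) : v ≤ m := by
  induction m with
  | zero => simp [chainTab, Tab.entries] at hv
  | succ m ih =>
    rcases mem_entries_updateTab (hc.2 m hm) (hc.shape_chainTab (by omega)) hv with rfl | hv
    · rfl
    · exact (ih (by omega) hv).trans m.le_succ

theorem restrict_chainTab (hc : IsZChain k n c) {i m : ℕ} (him : i ≤ m) (hm : m ≤ n) :
    (chainTab k c m).restrict i = chainTab k c i := by
  induction m with
  | zero => rw [Nat.le_zero.1 him]; rfl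
  | succ m ih =>
    rcases Nat.of_le_succ him with him | rfl
    · rw [← ih him (by omega)]
      exact restrict_updateTab (hc.2 m hm) (hc.shape_chainTab (by omega)) (by omega)
    · exact Tab.restrict_eq_self fun v hv => hc.le_of_mem_entries_chainTab hm hv

theorem eq_of_chainTab_eq {c' : ℕ → Word k} (hc : IsZChain k n c) (hc' : IsZChain k n c')
    (hT : chainTab k c n = chainTab k c' n) {i : ℕ} (hi : i ≤ n) : c i = c' i := by
  rw [← hc.shape_chainTab hi, ← hc'.shape_chainTab hi, ← hc.restrict_chainTab hi le_rfl,
    ← hc'.restrict_chainTab hi le_rfl, hT]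

end IsZChain

theorem chainTab_congr {c c' : ℕ → Word k} {m : ℕ} (h : ∀ i ≤ m, c i = c' i) :
    chainTab k c m = chainTab k c' m := by
  induction m with
  | zero => rfl
  | succ m ih =>
    simp only [chainTab, h m (by omega), h (m + 1) le_rfl, ih fun i hi => h i (by omega)]

end Restrict

section RevGrowth

variable {n : ℕ} {a b : ℕ → Word k}

/-- The growth diagram built backwards with `invRule` from its right edge `a` (column `n`) and its
top edge `b` (row `n`). -/
def revGrowth (k n : ℕ) (a b : ℕ → Word k) (c r : ℕ) : Word k :=
  if n ≤ c then a r
  else if n ≤ r then b c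
  else (invRule k (revGrowth k n a b c (r + 1)) (revGrowth k n a b (c + 1) r)
    (revGrowth k n a b (c + 1) (r + 1))).1
termination_by (n - c) + (n - r)

def revSquareX (k n : ℕ) (a b : ℕ → Word k) (c r : ℕ) : Option ℕ :=
  (invRule k (revGrowth k n a b c (r + 1)) (revGrowth k n a b (c + 1) r)
    (revGrowth k n a b (c + 1) (r + 1))).2

theorem revGrowth_of_le_col {c : ℕ} (hc : n ≤ c) (r : ℕ) : revGrowth k n a b c r = a r := by
  rw [revGrowth, if_pos hc]

theorem revGrowth_of_le_row {c r : ℕ} (hc : c < n) (hr : n ≤ r) : revGrowth k n a b c r = b c := by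
  rw [revGrowth, if_neg hc.not_ge, if_pos hr]

theorem revGrowth_of_lt {c r : ℕ} (hc : c < n) (hr : r < n) :
    revGrowth k n a b c r = (invRule k (revGrowth k n a b c (r + 1)) (revGrowth k n a b (c + 1) r)
      (revGrowth k n a b (c + 1) (r + 1))).1 := by
  rw [revGrowth, if_neg hc.not_ge, if_neg hr.not_ge]

theorem revGrowth_top (hab : a n = b n) {c : ℕ} (hc : c ≤ n) : revGrowth k n a b c n = b c := by
  rcases hc.lt_or_eq with hc | rfl
  · exact revGrowth_of_le_row hc le_rfl
  · rw [revGrowth_of_le_col le_rfl, hab]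

theorem reflGen_revGrowth_upper (ha : IsZChain k n a) (hb : IsZChain k n b) (hab : a n = b n)
    {c r : ℕ} (hc : c < n) (hr : r < n) :
    ReflGen (ZCovers k) (revGrowth k n a b c (r + 1)) (revGrowth k n a b (c + 1) (r + 1)) ∧
      ReflGen (ZCovers k) (revGrowth k n a b (c + 1) r) (revGrowth k n a b (c + 1) (r + 1)) := by
  constructor
  · rcases (show r + 1 ≤ n from hr).lt_or_eq with hr' | hr'
    · have h := reflGen_revGrowth_upper ha hb hab hc hr'
      rw [revGrowth_of_lt hc hr']
      exact (isLowerCorner_invRule h.1 h.2).bottom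
    · rw [hr', revGrowth_top hab hc.le, revGrowth_top hab hc]
      exact .single (hb.2 c hc)
  · rcases (show c + 1 ≤ n from hc).lt_or_eq with hc' | hc'
    · have h := reflGen_revGrowth_upper ha hb hab hc' hr
      rw [revGrowth_of_lt hc' hr]
      exact (isLowerCorner_invRule h.1 h.2).left
    · rw [hc', revGrowth_of_le_col le_rfl, revGrowth_of_le_col le_rfl]
      exact .single (ha.2 r hr)
termination_by (n - c) + (n - r)

theorem revGrowth_isLowerCorner (ha : IsZChain k n a) (hb : IsZChain k n b) (hab : a n = b n)
    {c r : ℕ} (hc : c < n) (hr : r < n) :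
    IsLowerCorner (revGrowth k n a b c r) (revGrowth k n a b c (r + 1))
      (revGrowth k n a b (c + 1) r) (revSquareX k n a b c r) := by
  have h := reflGen_revGrowth_upper ha hb hab hc hr
  rw [revGrowth_of_lt hc hr]
  exact isLowerCorner_invRule h.1 h.2

theorem growthRule_revGrowth (ha : IsZChain k n a) (hb : IsZChain k n b) (hab : a n = b n)
    {c r : ℕ} (hc : c < n) (hr : r < n) :
    growthRule k (revGrowth k n a b c r) (revGrowth k n a b c (r + 1))
      (revGrowth k n a b (c + 1) r) (revSquareX k n a b c r) =
        revGrowth k n a b (c + 1) (r + 1) := by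
  have h := reflGen_revGrowth_upper ha hb hab hc hr
  rw [revGrowth_of_lt hc hr]
  exact growthRule_invRule h.1 h.2

theorem rank_revGrowth_succ_succ (ha : IsZChain k n a) (hb : IsZChain k n b) (hab : a n = b n)
    {c r : ℕ} (hc : c < n) (hr : r < n) :
    (revGrowth k n a b (c + 1) (r + 1)).rank + (revGrowth k n a b c r).rank =
      (revGrowth k n a b c (r + 1)).rank + (revGrowth k n a b (c + 1) r).rank +
        if (revSquareX k n a b c r).isSome then 1 else 0 :=
  growthRule_revGrowth ha hb hab hc hr ▸ (revGrowth_isLowerCorner ha hb hab hc hr).rank_growthRule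

theorem revGrowth_zero_row (ha : IsZChain k n a) (hb : IsZChain k n b) (hab : a n = b n)
    {c : ℕ} (hc : c ≤ n) : revGrowth k n a b c 0 = [] := by
  refine Word.eq_nil_of_rank_eq_zero (Nat.le_zero.1 ?_)
  have h := rank_le_of_reflGen_succ (w := (revGrowth k n a b · 0))
    (fun i hi => (revGrowth_isLowerCorner ha hb hab hi (by omega)).bottom) hc
  simpa [revGrowth_of_le_col le_rfl, ha.1] using h

theorem revGrowth_zero_col (ha : IsZChain k n a) (hb : IsZChain k n b) (hab : a n = b n)
    {r : ℕ} (hr : r ≤ n) : revGrowth k n a b 0 r = [] := by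
  refine Word.eq_nil_of_rank_eq_zero (Nat.le_zero.1 ?_)
  have h := rank_le_of_reflGen_succ (w := revGrowth k n a b 0)
    (fun i hi => (revGrowth_isLowerCorner ha hb hab (by omega) hi).left) hr
  simpa [revGrowth_top hab (Nat.zero_le n), hb.1] using h

theorem card_filter_isSome_revSquareX_row (ha : IsZChain k n a) (hb : IsZChain k n b)
    (hab : a n = b n) {r : ℕ} (hr : r < n) :
    ((range n).filter fun c => (revSquareX k n a b c r).isSome).card = 1 := by
  have h := add_card_filter_eq_of_square (f := fun c r => (revGrowth k n a b c r).rank)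
    (mark := fun c r => (revSquareX k n a b c r).isSome) (m := n)
    fun c hc => rank_revGrowth_succ_succ ha hb hab hc hr
  simp only [revGrowth_of_le_col le_rfl, revGrowth_zero_col ha hb hab hr.le,
    revGrowth_zero_col ha hb hab hr, ha.rank hr, ha.rank hr.le, Word.rank_nil] at h
  omega

theorem card_filter_isSome_revSquareX_col (ha : IsZChain k n a) (hb : IsZChain k n b)
    (hab : a n = b n) {c : ℕ} (hc : c < n) :
    ((range n).filter fun r => (revSquareX k n a b c r).isSome).card = 1 := by
  have h := add_card_filter_eq_of_square (f := fun r c => (revGrowth k n a b c r).rank)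
    (mark := fun r c => (revSquareX k n a b c r).isSome) (m := n) (r := c) fun r hr => by
      have := rank_revGrowth_succ_succ ha hb hab hc hr
      omega
  simp only [revGrowth_top hab hc.le, revGrowth_top hab hc, revGrowth_zero_row ha hb hab hc.le,
    revGrowth_zero_row ha hb hab hc, hb.rank hc, hb.rank hc.le, Word.rank_nil] at h
  omega

end RevGrowth

section Bijection

variable {n : ℕ}

theorem ColoredPerm.ext_of_squareX {π π' : ColoredPerm n k}
    (h : ∀ c < n, ∀ r < n, squareX k n π c r = squareX k n π' c r) : π = π' := by
  have hc (c : Fin n) : π'.perm c = π.perm c ∧ π'.color c = π.color c := by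
    have hsq := (squareX_eq_some_iff π).2 ⟨c.isLt, rfl, rfl⟩
    rw [h c c.isLt _ (π.perm c).isLt] at hsq
    obtain ⟨_, hp, hcol⟩ := (squareX_eq_some_iff π').1 hsq
    exact ⟨Fin.ext hp, hcol⟩
  have hperm : π.perm = π'.perm := Equiv.ext fun c => (hc c).1.symm
  have hcolor : π.color = π'.color := funext fun c => (hc c).2.symm
  cases π
  cases π'
  congr

theorem exists_coloredPerm_squareX_eq {x : ℕ → ℕ → Option ℕ}
    (hcol : ∀ c < n, ((range n).filter fun r => (x c r).isSome).card = 1)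
    (hrow : ∀ r < n, ((range n).filter fun c => (x c r).isSome).card = 1)
    (hcolor : ∀ c < n, ∀ r < n, ∀ j ∈ x c r, 1 ≤ j ∧ j ≤ k) :
    ∃ π : ColoredPerm n k, ∀ c < n, ∀ r < n, squareX k n π c r = x c r := by
  have hρ (c : Fin n) : ∃ r : Fin n, ∀ s < n, (x c s).isSome ↔ s = r := by
    obtain ⟨r, hr⟩ := card_eq_one.1 (hcol c c.isLt)
    have hr' := mem_singleton_self r
    rw [← hr, mem_filter, mem_range] at hr'
    refine ⟨⟨r, hr'.1⟩, fun s hs => ?_⟩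
    simpa [hs] using congrArg (s ∈ ·) hr
  choose ρ hρ using hρ
  have hρ_surj : Function.Surjective ρ := by
    intro r
    obtain ⟨c, hc⟩ := card_pos.1 ((hrow r r.isLt).symm ▸ Nat.one_pos)
    rw [mem_filter, mem_range] at hc
    exact ⟨⟨c, hc.1⟩, Fin.ext ((hρ _ r r.isLt).1 hc.2).symm⟩
  have hsome (c : Fin n) : (x c (ρ c)).isSome := (hρ c _ (ρ c).isLt).2 rfl
  have hcolor' (c : Fin n) := hcolor c c.isLt _ (ρ c).isLt _ (Option.get_mem (hsome c))
  refine ⟨⟨Equiv.ofBijective ρ hρ_surj.bijective_of_finite, fun c => (x c (ρ c)).get (hsome c),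
    fun c => (hcolor' c).1, fun c => (hcolor' c).2⟩, fun c hc r hr => ?_⟩
  by_cases h : (ρ ⟨c, hc⟩ : ℕ) = r
  · subst h
    simp [squareX, hc]
  · simp only [squareX, hc, hr, and_self, dite_true, Equiv.ofBijective_apply, if_neg h]
    exact (Option.not_isSome_iff_eq_none.1 fun hs => h ((hρ _ r hr).1 hs).symm).symm

variable {a b : ℕ → Word k}

theorem exists_squareX_eq_revSquareX (ha : IsZChain k n a) (hb : IsZChain k n b) (hab : a n = b n) :
    ∃ π : ColoredPerm n k, ∀ c < n, ∀ r < n, squareX k n π c r = revSquareX k n a b c r :=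
  exists_coloredPerm_squareX_eq (fun _ hc => card_filter_isSome_revSquareX_col ha hb hab hc)
    (fun _ hr => card_filter_isSome_revSquareX_row ha hb hab hr)
    fun _ hc _ hr => (revGrowth_isLowerCorner ha hb hab hc hr).color

theorem growth_eq_revGrowth_of_squareX (ha : IsZChain k n a) (hb : IsZChain k n b)
    (hab : a n = b n) {π : ColoredPerm n k}
    (hX : ∀ c < n, ∀ r < n, squareX k n π c r = revSquareX k n a b c r) :
    ∀ c ≤ n, ∀ r ≤ n, growth k n π c r = revGrowth k n a b c r
  | 0, _, r, hr => by rw [growth_zero_left, revGrowth_zero_col ha hb hab hr]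
  | c + 1, hc, 0, _ => by rw [growth_zero_bottom, revGrowth_zero_row ha hb hab hc]
  | c + 1, hc, r + 1, hr => by
    rw [growth_succ_succ, hX c hc r hr,
      growth_eq_revGrowth_of_squareX ha hb hab hX c (by omega) r (by omega),
      growth_eq_revGrowth_of_squareX ha hb hab hX c (by omega) (r + 1) hr,
      growth_eq_revGrowth_of_squareX ha hb hab hX (c + 1) hc r (by omega),
      growthRule_revGrowth ha hb hab hc hr]

theorem growth_eq_revGrowth_of_edges {π : ColoredPerm n k} (ha : ∀ r ≤ n, growth k n π n r = a r)
    (hb : ∀ c ≤ n, growth k n π c n = b c) {c r : ℕ} (hc : c ≤ n) (hr : r ≤ n) :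
    growth k n π c r = revGrowth k n a b c r := by
  rcases hc.lt_or_eq with hc | rfl
  · rcases hr.lt_or_eq with hr | rfl
    · rw [revGrowth_of_lt hc hr, ← growth_eq_revGrowth_of_edges ha hb hc.le hr,
        ← growth_eq_revGrowth_of_edges ha hb hc hr.le, ← growth_eq_revGrowth_of_edges ha hb hc hr,
        growth_succ_succ, (growth_isLowerCorner π c r).invRule_growthRule]
    · rw [hb c hc.le, revGrowth_of_le_row hc le_rfl]
  · rw [ha r hr, revGrowth_of_le_col le_rfl]
termination_by (n - c) + (n - r)

theorem squareX_eq_revSquareX_of_edges {π : ColoredPerm n k}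
    (ha : ∀ r ≤ n, growth k n π n r = a r) (hb : ∀ c ≤ n, growth k n π c n = b c)
    {c r : ℕ} (hc : c < n) (hr : r < n) : squareX k n π c r = revSquareX k n a b c r := by
  rw [revSquareX, ← growth_eq_revGrowth_of_edges ha hb hc.le hr,
    ← growth_eq_revGrowth_of_edges ha hb hc hr.le, ← growth_eq_revGrowth_of_edges ha hb hc hr,
    growth_succ_succ, (growth_isLowerCorner π c r).invRule_growthRule]

end Bijection

theorem growth_bijective_general (k n : ℕ) :
    Set.BijOn (fun π : ColoredPerm n k => (PhatTab k n π, QhatTab k n π)) Set.univ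
      {PQ : Tab k × Tab k |
        IsPathTab k n PQ.1 ∧ IsPathTab k n PQ.2 ∧ Tab.shape PQ.1 = Tab.shape PQ.2} := by
  refine ⟨fun π _ => ?_, fun π _ π' _ hππ' => ?_, fun PQ ⟨⟨a, ha, hPa⟩, ⟨b, hb, hQb⟩, hshape⟩ => ?_⟩
  · refine ⟨⟨_, isZChain_phatChain π, rfl⟩, ⟨_, isZChain_qhatChain π, rfl⟩, ?_⟩
    exact ((isZChain_phatChain π).shape_chainTab le_rfl).trans
      ((isZChain_qhatChain π).shape_chainTab le_rfl).symm
  · obtain ⟨hP, hQ⟩ := Prod.mk.inj hππ'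
    have ha r (hr : r ≤ n) :=
      (isZChain_phatChain π').eq_of_chainTab_eq (isZChain_phatChain π) hP.symm hr
    have hb c (hc : c ≤ n) :=
      (isZChain_qhatChain π').eq_of_chainTab_eq (isZChain_qhatChain π) hQ.symm hc
    exact ColoredPerm.ext_of_squareX fun c hc r hr =>
      (squareX_eq_revSquareX_of_edges (fun _ _ => rfl) (fun _ _ => rfl) hc hr).trans
        (squareX_eq_revSquareX_of_edges ha hb hc hr).symm
  · have hab : a n = b n := by
      rw [← ha.shape_chainTab le_rfl, ← hb.shape_chainTab le_rfl, ← hPa, ← hQb, hshape]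
    obtain ⟨π, hX⟩ := exists_squareX_eq_revSquareX ha hb hab
    have hgrowth := growth_eq_revGrowth_of_squareX ha hb hab hX
    refine ⟨π, Set.mem_univ _, Prod.ext ?_ ?_⟩
    · rw [hPa]
      exact chainTab_congr fun r hr => (hgrowth n le_rfl r hr).trans (revGrowth_of_le_col le_rfl r)
    · rw [hQb]
      exact chainTab_congr fun c hc => (hgrowth c hc n le_rfl).trans (revGrowth_top hab hc)

/-- For each `k ≥ 1` and `n ≥ 0`, the map `π ↦ (P̂(π), Q̂(π))` given by
Fomin's growth rules on the square diagram is a bijection from the set of `k`-colored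
permutations of length `n` onto the set of pairs of `k`-ribbon Fibonacci path tableaux
with entries `1, …, n` having the same `k`-ribbon Fibonacci shape. -/
theorem growth_bijective (k n : ℕ) (hk : 1 ≤ k) :
    Set.BijOn (fun π : ColoredPerm n k => (PhatTab k n π, QhatTab k n π)) Set.univ
      {PQ : Tab k × Tab k |
        IsPathTab k n PQ.1 ∧ IsPathTab k n PQ.2 ∧ Tab.shape PQ.1 = Tab.shape PQ.2} :=
  growth_bijective_general k n

end KRF
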